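/- Let (cl_n, cl_∞) be a consistent system of closure operations and (Π_{m,n}, Π) a consistent system of maps with Π locally finite. Let (A_n) be a Π-invariant cl-closed chain with limit A_∞. If A_∞ is Π-equivariantly finitely generated (A_∞ = (Π(G))^{cl_∞} for some finite G ⊆ A_∞), then the chain stabilizes, is eventually finitely generated, and is eventually saturated (A_∞ ∩ S_n = A_n for all large n). -/

import Mathlib

/-
Pick a finite equivariant generating set `G` of `A_∞`; it lies in a single `A_r`. For
`r ≤ m ≤ n`, consistency of maps and closures gives `cl_n (Π_{m,n} G) = A_∞ ∩ S_n`, and the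
sandwich `A_∞ ∩ S_n = cl_n (Π_{m,n} G) ⊆ cl_n (Π_{m,n} A_m) ⊆ A_n ⊆ A_∞ ∩ S_n` yields
stabilization and saturation at once; `Π_{n,n} G` is then a finite generating set of `A_n`.
-/

def IsClosureOn {α : Type*} (X : Set α) (c : Set α → Set α) : Prop :=
  (∀ A : Set α, A ⊆ X → A ⊆ c A) ∧ (∀ A : Set α, A ⊆ X → c A ⊆ X) ∧
  (∀ A : Set α, A ⊆ X → c (c A) = c A) ∧
  (∀ A B : Set α, A ⊆ B → B ⊆ X → c A ⊆ c B)

def imSet {α : Type*} (P : Set (α → α)) (A : Set α) : Set α :=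
  {y | ∃ π ∈ P, ∃ v ∈ A, y = π v}

section

variable {α : Type*}

lemma imSet_mono (P : Set (α → α)) {A B : Set α} (h : A ⊆ B) : imSet P A ⊆ imSet P B := by
  rintro y ⟨π, hπ, v, hv, rfl⟩
  exact ⟨π, hπ, v, h hv, rfl⟩

lemma imSet_subset {P : Set (α → α)} {X Y A : Set α} (hP : ∀ π ∈ P, ∀ v ∈ X, π v ∈ Y)
    (hA : A ⊆ X) : imSet P A ⊆ Y := by
  rintro y ⟨π, hπ, v, hv, rfl⟩
  exact hP π hπ v (hA hv)

lemma Monotone.exists_subset_of_finite_subset_iUnion {A : ℕ → Set α} (hA : Monotone A)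
    {G : Set α} (hG : G.Finite) (hGA : G ⊆ ⋃ k, A k) : ∃ r, G ⊆ A r := by
  simpa using hA.directed_le.exists_mem_subset_of_finset_subset_biUnion
    (s := hG.toFinset) (by simpa using hGA)

lemma cl_imSet_eq_and_inter_eq {Y Am An Ainf G : Set α} {c : Set α → Set α}
    {Q : Set (α → α)} (hc : ∀ B C, B ⊆ C → C ⊆ Y → c B ⊆ c C) (hQ : imSet Q Am ⊆ Y)
    (hinv : c (imSet Q Am) ⊆ An) (hAn : An ⊆ Ainf ∩ Y) (hG : G ⊆ Am)
    (hgen : c (imSet Q G) = Ainf ∩ Y) :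
    c (imSet Q Am) = An ∧ Ainf ∩ Y = An := by
  have hlow : Ainf ∩ Y ⊆ c (imSet Q Am) := hgen ▸ hc _ _ (imSet_mono Q hG) hQ
  exact ⟨hinv.antisymm (hAn.trans hlow), (hlow.trans hinv).antisymm hAn⟩

end

theorem global_fg_implies_local_fg_general {α : Type*} (S : ℕ → Set α)
    (cl : ℕ → Set α → Set α) (clinf : Set α → Set α)
    (Pi : Set (α → α)) (P : ℕ → ℕ → Set (α → α))
    (A : ℕ → Set α)
    (hcl : ∀ n, IsClosureOn (S n) (cl n))
    (hconsCl : ∀ (n : ℕ) (B : Set α), cl n (B ∩ S n) = clinf B ∩ S n)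
    (hmap : ∀ m n : ℕ, m ≤ n → ∀ π ∈ P m n, ∀ v ∈ S m, π v ∈ S n)
    (hconsMaps : ∀ m n : ℕ, m ≤ n → ∀ B : Set α, B ⊆ S m →
      imSet (P m n) B = imSet Pi B ∩ S n)
    (hlocfin : ∀ m n : ℕ, m ≤ n → ∀ B : Set α, B ⊆ S m → B.Finite →
      (imSet (P m n) B).Finite)
    (hAsub : ∀ n, A n ⊆ S n)
    (hAmono : ∀ m n : ℕ, m ≤ n → A m ⊆ A n)
    (hAinv : ∀ m n : ℕ, m ≤ n → cl n (imSet (P m n) (A m)) ⊆ A n)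
    (hfg : ∃ G : Set α, G.Finite ∧ G ⊆ (⋃ k, A k) ∧
      clinf (imSet Pi G) = ⋃ k, A k) :
    (∃ r : ℕ, ∀ m n : ℕ, r ≤ m → m ≤ n →
      cl n (imSet (P m n) (A m)) = A n) ∧
    (∃ N : ℕ, ∀ n, N ≤ n →
      ∃ G : Set α, G.Finite ∧ G ⊆ A n ∧ cl n G = A n) ∧
    (∃ N : ℕ, ∀ n, N ≤ n → (⋃ k, A k) ∩ S n = A n) := by
  obtain ⟨G, hGfin, hGsub, hGgen⟩ := hfg
  obtain ⟨r, hGr⟩ := Monotone.exists_subset_of_finite_subset_iUnion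
    (fun m n => hAmono m n) hGfin hGsub
  have hGA : ∀ m, r ≤ m → G ⊆ A m := fun m hm => hGr.trans (hAmono r m hm)
  have hGS : ∀ m, r ≤ m → G ⊆ S m := fun m hm => (hGA m hm).trans (hAsub m)
  have hgen : ∀ m n, r ≤ m → m ≤ n → cl n (imSet (P m n) G) = (⋃ k, A k) ∩ S n :=
    fun m n hrm hmn => by rw [hconsMaps m n hmn G (hGS m hrm), hconsCl, hGgen]
  have key : ∀ m n, r ≤ m → m ≤ n →
      cl n (imSet (P m n) (A m)) = A n ∧ (⋃ k, A k) ∩ S n = A n :=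
    fun m n hrm hmn => cl_imSet_eq_and_inter_eq (hcl n).2.2.2
      (imSet_subset (hmap m n hmn) (hAsub m)) (hAinv m n hmn)
      (fun x hx => ⟨Set.mem_iUnion.mpr ⟨n, hx⟩, hAsub n hx⟩) (hGA m hrm) (hgen m n hrm hmn)
  refine ⟨⟨r, fun m n hrm hmn => (key m n hrm hmn).1⟩,
    ⟨r, fun n hn => ⟨imSet (P n n) G, hlocfin n n le_rfl G (hGS n hn) hGfin, ?_, ?_⟩⟩,
    ⟨r, fun n hn => (key n n hn le_rfl).2⟩⟩
  · calc imSet (P n n) G ⊆ cl n (imSet (P n n) G) :=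
          (hcl n).1 _ (imSet_subset (hmap n n le_rfl) (hGS n hn))
      _ ⊆ cl n (imSet (P n n) (A n)) :=
          (hcl n).2.2.2 _ _ (imSet_mono _ (hGA n hn)) (imSet_subset (hmap n n le_rfl) (hAsub n))
      _ ⊆ A n := hAinv n n le_rfl
  · rw [hgen n n hn le_rfl, (key n n hn le_rfl).2]

/-- Global-to-local finite generation: for a consistent system of closures and
a consistent, locally finite system of maps, if the limit of a Π-invariant
cl-closed chain is Π-equivariantly finitely generated, then the chain
stabilizes, is eventually finitely generated, and is eventually saturated. -/
theorem global_fg_implies_local_fg {α : Type*} (S : ℕ → Set α)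
    (cl : ℕ → Set α → Set α) (clinf : Set α → Set α)
    (Pi : Set (α → α)) (P : ℕ → ℕ → Set (α → α))
    (A : ℕ → Set α)
    (hchain : ∀ m n : ℕ, m ≤ n → S m ⊆ S n)
    (hunion : (⋃ n, S n) = Set.univ)
    (hcl : ∀ n, IsClosureOn (S n) (cl n))
    (hclinf : IsClosureOn Set.univ clinf)
    (hconsCl : ∀ (n : ℕ) (B : Set α), cl n (B ∩ S n) = clinf B ∩ S n)
    (hmap : ∀ m n : ℕ, m ≤ n → ∀ π ∈ P m n, ∀ v ∈ S m, π v ∈ S n)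
    (hconsMaps : ∀ m n : ℕ, m ≤ n → ∀ B : Set α, B ⊆ S m →
      imSet (P m n) B = imSet Pi B ∩ S n)
    (hlocfin : ∀ m n : ℕ, m ≤ n → ∀ B : Set α, B ⊆ S m → B.Finite →
      (imSet (P m n) B).Finite)
    (hAsub : ∀ n, A n ⊆ S n)
    (hAmono : ∀ m n : ℕ, m ≤ n → A m ⊆ A n)
    (hAclosed : ∀ n, cl n (A n) = A n)
    (hAinv : ∀ m n : ℕ, m ≤ n → cl n (imSet (P m n) (A m)) ⊆ A n)
    (hfg : ∃ G : Set α, G.Finite ∧ G ⊆ (⋃ k, A k) ∧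
      clinf (imSet Pi G) = ⋃ k, A k) :
    (∃ r : ℕ, ∀ m n : ℕ, r ≤ m → m ≤ n →
      cl n (imSet (P m n) (A m)) = A n) ∧
    (∃ N : ℕ, ∀ n, N ≤ n →
      ∃ G : Set α, G.Finite ∧ G ⊆ A n ∧ cl n G = A n) ∧
    (∃ N : ℕ, ∀ n, N ≤ n → (⋃ k, A k) ∩ S n = A n) :=
  global_fg_implies_local_fg_general S cl clinf Pi P A hcl hconsCl hmap hconsMaps hlocfin hAsub
    hAmono hAinv hfg
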